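/- The set of (ℤ/2)-characteristic matrices over P₁⁴(8) whose first four columns form the 4×4 identity matrix is exactly the three-element set {b₁, b₂, b₃}: each bᵢ satisfies the nonsingularity condition at all twenty vertices in V₁, and every 4×8 matrix over ℤ/2 with identity first block satisfying the nonsingularity condition equals one of b₁, b₂, b₃. -/

import Mathlib

open Matrix

def V1 : List (Fin 4 → Fin 8) :=
  [![0,1,2,3], ![0,1,2,4], ![0,1,3,7], ![0,1,4,5], ![0,1,5,6], ![0,1,6,7], ![0,2,3,4], ![0,3,4,5], ![0,3,5,6], ![0,3,6,7], ![1,2,3,7], ![1,2,4,5], ![1,2,5,7], ![1,5,6,7], ![2,3,4,6], ![2,3,6,7], ![2,4,5,7], ![2,4,6,7], ![3,4,5,6], ![4,5,6,7]]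
def b1 : Matrix (Fin 4) (Fin 8) (ZMod 2) :=
  !![1, 0, 0, 0, 1, 0, 0, 1;
    0, 1, 0, 0, 1, 1, 1, 0;
    0, 0, 1, 0, 0, 1, 0, 1;
    0, 0, 0, 1, 1, 1, 1, 1]
def b2 : Matrix (Fin 4) (Fin 8) (ZMod 2) :=
  !![1, 0, 0, 0, 1, 0, 0, 1;
    0, 1, 0, 0, 1, 1, 1, 1;
    0, 0, 1, 0, 0, 1, 0, 1;
    0, 0, 0, 1, 1, 1, 1, 0]
def b3 : Matrix (Fin 4) (Fin 8) (ZMod 2) :=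
  !![1, 0, 0, 0, 0, 1, 1, 1;
    0, 1, 0, 0, 1, 0, 1, 0;
    0, 0, 1, 0, 0, 1, 0, 1;
    0, 0, 0, 1, 1, 0, 1, 1]

/-!
For `Λ = [I | C]`, the vertices `{i, j, k, 4 + l}` with three identity columns only see the entry of
column `l` of `C` in the remaining row, which forces `C 0 3 = C 1 0 = C 2 3 = C 3 0 = 1`. Expanding
the twenty determinants turns the remaining conditions into polynomial identities in the other
twelve entries of `C`, and the `2 ^ 12` cases are checked exhaustively.
-/

theorem Matrix.det_fin_four {R : Type*} [CommRing R] (A : Matrix (Fin 4) (Fin 4) R) :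
    A.det =
      A 0 0 * A 1 1 * A 2 2 * A 3 3 - A 0 0 * A 1 1 * A 2 3 * A 3 2
      - A 0 0 * A 1 2 * A 2 1 * A 3 3 + A 0 0 * A 1 2 * A 2 3 * A 3 1
      + A 0 0 * A 1 3 * A 2 1 * A 3 2 - A 0 0 * A 1 3 * A 2 2 * A 3 1
      - A 0 1 * A 1 0 * A 2 2 * A 3 3 + A 0 1 * A 1 0 * A 2 3 * A 3 2
      + A 0 1 * A 1 2 * A 2 0 * A 3 3 - A 0 1 * A 1 2 * A 2 3 * A 3 0
      - A 0 1 * A 1 3 * A 2 0 * A 3 2 + A 0 1 * A 1 3 * A 2 2 * A 3 0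
      + A 0 2 * A 1 0 * A 2 1 * A 3 3 - A 0 2 * A 1 0 * A 2 3 * A 3 1
      - A 0 2 * A 1 1 * A 2 0 * A 3 3 + A 0 2 * A 1 1 * A 2 3 * A 3 0
      + A 0 2 * A 1 3 * A 2 0 * A 3 1 - A 0 2 * A 1 3 * A 2 1 * A 3 0
      - A 0 3 * A 1 0 * A 2 1 * A 3 2 + A 0 3 * A 1 0 * A 2 2 * A 3 1
      + A 0 3 * A 1 1 * A 2 0 * A 3 2 - A 0 3 * A 1 1 * A 2 2 * A 3 0
      - A 0 3 * A 1 2 * A 2 0 * A 3 1 + A 0 3 * A 1 2 * A 2 1 * A 3 0 := by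
  rw [det_succ_row_zero, Fin.sum_univ_four]
  simp only [Nat.succ_eq_add_one, Nat.reduceAdd, Fin.isValue, Fin.coe_ofNat_eq_mod, Nat.zero_mod, pow_zero,
    one_mul, Fin.succAbove_zero, det_fin_three, submatrix_apply, Fin.succ_zero_eq_one, Fin.succ_one_eq_two,
    Fin.reduceSucc, Nat.one_mod, pow_one, neg_mul, Fin.succAbove, Fin.castSucc_zero, zero_lt_one, ↓reduceIte,
    Fin.castSucc_one, lt_self_iff_false, Fin.reduceCastSucc, Fin.lt_one_iff, Fin.reduceEq, Nat.reduceMod, even_two,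
    Even.neg_pow, one_pow, Fin.reduceLT, Nat.mod_succ]
  ring

def withIdentity {R : Type*} [Zero R] [One R] (C : Matrix (Fin 4) (Fin 4) R) :
    Matrix (Fin 4) (Fin 8) R :=
  !![1, 0, 0, 0, C 0 0, C 0 1, C 0 2, C 0 3;
     0, 1, 0, 0, C 1 0, C 1 1, C 1 2, C 1 3;
     0, 0, 1, 0, C 2 0, C 2 1, C 2 2, C 2 3;
     0, 0, 0, 1, C 3 0, C 3 1, C 3 2, C 3 3]

theorem eq_withIdentity_of_submatrix_eq_one {R : Type*} [Zero R] [One R]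
    {Λ : Matrix (Fin 4) (Fin 8) R} (h : Λ.submatrix id (Fin.castLE (Nat.le_add_right 4 4)) = 1) :
    Λ = withIdentity (Λ.submatrix id (Fin.natAdd 4)) := by
  ext i j
  refine Fin.addCases (m := 4) (n := 4) (fun j => ?_) (fun j => ?_) j
  · have hij := congrFun₂ h i j
    fin_cases i <;> fin_cases j <;> exact hij
  · fin_cases i <;> fin_cases j <;> rfl

def IsCharacteristicMatrix (Λ : Matrix (Fin 4) (Fin 8) (ZMod 2)) : Prop :=
  ∀ v ∈ V1, IsUnit (Λ.submatrix id v).det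

namespace IsCharacteristicMatrix

theorem withIdentity_entries_eq_one {C : Matrix (Fin 4) (Fin 4) (ZMod 2)}
    (hC : IsCharacteristicMatrix (withIdentity C)) :
    C 0 3 = 1 ∧ C 1 0 = 1 ∧ C 2 3 = 1 ∧ C 3 0 = 1 := by
  have h0124 := hC ![0, 1, 2, 4] (by simp [V1])
  have h0137 := hC ![0, 1, 3, 7] (by simp [V1])
  have h0234 := hC ![0, 2, 3, 4] (by simp [V1])
  have h1237 := hC ![1, 2, 3, 7] (by simp [V1])
  simp [withIdentity, det_fin_four] at h0124 h0137 h0234 h1237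
  exact ⟨h1237, h0234, h0137, h0124⟩

set_option synthInstance.maxSize 2000 in
theorem withIdentity_eq_of_entries_eq_one : ∀ a b c f g h i j k n o p : ZMod 2,
    IsCharacteristicMatrix (withIdentity !![a, b, c, 1; 1, f, g, h; i, j, k, 1; 1, n, o, p]) →
    withIdentity !![a, b, c, 1; 1, f, g, h; i, j, k, 1; 1, n, o, p] = b1 ∨
    withIdentity !![a, b, c, 1; 1, f, g, h; i, j, k, 1; 1, n, o, p] = b2 ∨
    withIdentity !![a, b, c, 1; 1, f, g, h; i, j, k, 1; 1, n, o, p] = b3 := by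
  simp only [IsCharacteristicMatrix, V1, Fin.isValue, List.mem_cons, List.not_mem_nil, or_false, withIdentity,
    of_apply, cons_val', cons_val_zero, cons_val_fin_one, cons_val_one, cons_val, det_fin_four, submatrix_apply, id_eq,
    isUnit_iff_eq_one, forall_eq_or_imp, mul_one, mul_zero, sub_zero, add_zero, one_mul, zero_mul, zero_sub,
    ZMod.neg_eq_self_mod_two, sub_self, zero_add, forall_eq, true_and, b1, EmbeddingLike.apply_eq_iff_eq, vecCons_inj,
    and_true, b2, b3, and_imp]
  decide +kernel

theorem withIdentity_eq {C : Matrix (Fin 4) (Fin 4) (ZMod 2)}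
    (hC : IsCharacteristicMatrix (withIdentity C)) :
    withIdentity C = b1 ∨ withIdentity C = b2 ∨ withIdentity C = b3 := by
  obtain ⟨h03, h10, h23, h30⟩ := hC.withIdentity_entries_eq_one
  have hC' : C = !![C 0 0, C 0 1, C 0 2, 1; 1, C 1 1, C 1 2, C 1 3;
      C 2 0, C 2 1, C 2 2, 1; 1, C 3 1, C 3 2, C 3 3] := by
    ext i j
    fin_cases i <;> fin_cases j <;> simp [h03, h10, h23, h30]
  rw [hC'] at hC ⊢
  exact withIdentity_eq_of_entries_eq_one _ _ _ _ _ _ _ _ _ _ _ _ hC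

end IsCharacteristicMatrix

theorem isCharacteristicMatrix_b1 : IsCharacteristicMatrix b1 := by
  simp [IsCharacteristicMatrix, V1, det_fin_four, CharTwo.add_self_eq_zero, b1]

theorem isCharacteristicMatrix_b2 : IsCharacteristicMatrix b2 := by
  simp [IsCharacteristicMatrix, V1, det_fin_four, CharTwo.add_self_eq_zero, b2]

theorem isCharacteristicMatrix_b3 : IsCharacteristicMatrix b3 := by
  simp [IsCharacteristicMatrix, V1, det_fin_four, CharTwo.add_self_eq_zero, b3]

/-- The (ℤ/2)-characteristic matrices over P₁⁴(8) with identity first block are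
exactly b₁, b₂, b₃. -/
theorem stmt1 (Λ : Matrix (Fin 4) (Fin 8) (ZMod 2)) :
    (Λ.submatrix id (Fin.castLE (by omega : (4:ℕ) ≤ 8)) = 1 ∧
      ∀ v ∈ V1, IsUnit (Λ.submatrix id v).det) ↔
    (Λ = b1 ∨ Λ = b2 ∨ Λ = b3) := by
  constructor
  · rintro ⟨hI, hΛ⟩
    rw [eq_withIdentity_of_submatrix_eq_one hI] at hΛ ⊢
    exact IsCharacteristicMatrix.withIdentity_eq hΛ
  · rintro (rfl | rfl | rfl)
    exacts [⟨by decide, isCharacteristicMatrix_b1⟩, ⟨by decide, isCharacteristicMatrix_b2⟩,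
      ⟨by decide, isCharacteristicMatrix_b3⟩]
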